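/- arXiv:1011.2649 — 2 statements merged into one kernel-verified Lean document; each statement's English description precedes it below -/
import Mathlib

section
/- Second marginalization identity of Appendix A: summing p(μ^A, μ^B | t, F)·p(t | F) over all admissible match-count vectors t, where p(t|F) = [Π_j C(F_j,t_j)/C(N,T)]·[C(n^A,T)·C(N−n^A,n^B−T)/C(N,n^B)], yields p(μ^A,μ^B|F) = [Π_j C(F_j, f^A_j)·C(F_j, f^B_j)] / [C(n^A; f^A)·C(n^B; f^B)·C(N,n^A)·C(N,n^B)], i.e., the two samples are conditionally independent simple random samples without replacement given the population counts F. -/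
/-!
Summing over the match counts `t` coordinate by coordinate, the numerators multiply to
`∏ⱼ Σₜ C(Fⱼ, t) C(Fⱼ - f^Aⱼ, f^Bⱼ - t) C(Fⱼ - t, f^Aⱼ - t)`, and each inner sum is
`C(Fⱼ, f^Aⱼ) C(Fⱼ, f^Bⱼ)`: the summand counts pairs of subsets of sizes `f^Aⱼ`, `f^Bⱼ` with
intersection of size `t` (Vandermonde after `C(F, t) C(F - t, a - t) = C(F, a) C(a, t)`).
The global factors depend on `t` only through `T = Σⱼ tⱼ`, and cancel because
`C(N, n^A) C(n^A, T) = C(N, T) C(N - T, n^A - T)`.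
-/

open Finset

namespace Nat

theorem sum_Icc_choose_mul_choose_sub {F a : ℕ} (b : ℕ) (ha : a ≤ F) :
    ∑ t ∈ Icc 0 (min a b), a.choose t * (F - a).choose (b - t) = F.choose b := by
  have vandermonde := add_choose_eq a (F - a) b
  rw [Nat.add_sub_cancel' ha, Finset.Nat.sum_antidiagonal_eq_sum_range_succ_mk] at vandermonde
  rw [vandermonde]
  refine sum_subset (fun t ht => by simp only [mem_Icc, mem_range] at ht ⊢; omega) ?_
  intro t ht ht'
  simp only [mem_Icc, mem_range, not_and_or, not_le] at ht ht'
  rw [choose_eq_zero_of_lt (by omega : a < t), zero_mul]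

theorem sum_choose_mul_choose_sub_mul_choose_sub (F a b : ℕ) :
    ∑ t ∈ Icc 0 (min a b), F.choose t * ((F - a).choose (b - t) * (F - t).choose (a - t))
      = F.choose a * F.choose b := by
  calc _ = ∑ t ∈ Icc 0 (min a b), F.choose a * (a.choose t * (F - a).choose (b - t)) := by
        refine sum_congr rfl fun t ht => ?_
        have hta : t ≤ a := (mem_Icc.1 ht).2.trans (min_le_left a b)
        rw [mul_left_comm, ← choose_mul hta]
        ring
    _ = F.choose a * F.choose b := by
        rcases le_or_gt a F with ha | ha
        · rw [← mul_sum, sum_Icc_choose_mul_choose_sub b ha]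
        · simp [choose_eq_zero_of_lt ha]

end Nat

theorem prod_choose_mul_choose_eq_sum_Icc {ι R : Type*} [Fintype ι] [DecidableEq ι]
    [CommSemiring R] (F a b : ι → ℕ) :
    ∏ j, ((F j).choose (a j) : R) * ((F j).choose (b j) : R)
      = ∑ t ∈ Icc (0 : ι → ℕ) (fun j => min (a j) (b j)),
          ∏ j, ((F j).choose (t j) : R) *
            (((F j - a j).choose (b j - t j) : R) * ((F j - t j).choose (a j - t j) : R)) := by
  simp_rw [← Nat.cast_mul, ← Nat.sum_choose_mul_choose_sub_mul_choose_sub, Nat.cast_sum,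
    Nat.cast_mul, prod_univ_sum, Pi.Icc_eq, Pi.zero_apply]

theorem choose_div_choose_mul_choose {K : Type*} [Field K] [CharZero K] {N n T : ℕ}
    (hT : T ≤ n) :
    (n.choose T : K) / ((N.choose T : K) * ((N - T).choose (n - T) : K)) = (N.choose n : K)⁻¹ := by
  have hnT : (n.choose T : K) ≠ 0 := Nat.cast_ne_zero.2 (Nat.choose_pos hT).ne'
  rw [← Nat.cast_mul, ← Nat.choose_mul hT, Nat.cast_mul, div_mul_cancel_right₀ hnT]

theorem div_mul_hypergeometric_eq {K : Type*} [Field K] [CharZero K] {N nA nB T : ℕ}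
    (hT : T ≤ nA) (hcover : nA + nB ≤ N + T) (P Q MA MB : K) :
    P / (MA * (MB * (((N - nA).choose (nB - T) : K) * ((N - T).choose (nA - T) : K)))) *
        (Q / (N.choose T : K) * ((nA.choose T : K) * ((N - nA).choose (nB - T) : K) /
          (N.choose nB : K)))
      = Q * P / (MA * (MB * ((N.choose nA : K) * (N.choose nB : K)))) := by
  set X : K := ((N - nA).choose (nB - T) : K)
  have hX : X ≠ 0 := Nat.cast_ne_zero.2 (Nat.choose_pos (by omega)).ne'
  calc _ = Q * P / (MA * (MB * (N.choose nB : K))) * (X / X) *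
        ((nA.choose T : K) / ((N.choose T : K) * ((N - T).choose (nA - T) : K))) := by ring
    _ = _ := by rw [div_self hX, choose_div_choose_mul_choose hT]; ring

theorem marginalize_match_count_vector_general
    (k : ℕ) (F fA fB : Fin k → ℕ) (N nA nB : ℕ)
    (hN : N = ∑ j, F j) (hnA : nA = ∑ j, fA j) (hnB : nB = ∑ j, fB j)
    (hA : ∀ j, fA j ≤ F j) :
    (∑ t ∈ Finset.Icc (0 : Fin k → ℕ) (fun j => min (fA j) (fB j)),
        if ∀ j, fA j + fB j ≤ F j + t j then
          -- p(μ^A, μ^B | t, F) as derived in Appendix A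
          ((∏ j, ((F j - fA j).choose (fB j - t j) : ℚ) *
              ((F j - t j).choose (fA j - t j) : ℚ)) /
            (((nA.factorial : ℚ) / ∏ j, ((fA j).factorial : ℚ)) *
              (((nB.factorial : ℚ) / ∏ j, ((fB j).factorial : ℚ)) *
                (((N - nA).choose (nB - ∑ j, t j) : ℚ) *
                  ((N - ∑ j, t j).choose (nA - ∑ j, t j) : ℚ)))))
          -- times p(t | F)
          * (((∏ j, ((F j).choose (t j) : ℚ)) / (N.choose (∑ j, t j) : ℚ)) *
              (((nA.choose (∑ j, t j) : ℚ) *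
                  ((N - nA).choose (nB - ∑ j, t j) : ℚ)) / (N.choose nB : ℚ)))
        else 0)
    = (∏ j, ((F j).choose (fA j) : ℚ) * ((F j).choose (fB j) : ℚ)) /
        (((nA.factorial : ℚ) / ∏ j, ((fA j).factorial : ℚ)) *
          (((nB.factorial : ℚ) / ∏ j, ((fB j).factorial : ℚ)) *
            ((N.choose nA : ℚ) * (N.choose nB : ℚ)))) := by
  rw [prod_choose_mul_choose_eq_sum_Icc, sum_div]
  refine sum_congr rfl fun t ht => ?_
  have ht_le : ∀ j, t j ≤ fA j ∧ t j ≤ fB j := fun j => le_min_iff.1 ((mem_Icc.1 ht).2 j)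
  have hT : ∑ j, t j ≤ nA := hnA ▸ sum_le_sum fun j _ => (ht_le j).1
  split_ifs with hadm
  · have hcover : nA + nB ≤ N + ∑ j, t j := by
      rw [hN, hnA, hnB, ← sum_add_distrib, ← sum_add_distrib]
      exact sum_le_sum fun j _ => hadm j
    rw [prod_mul_distrib (f := fun j => ((F j).choose (t j) : ℚ))]
    exact div_mul_hypergeometric_eq (K := ℚ) hT hcover _ _ _ _
  · obtain ⟨j, hj⟩ := not_forall.1 hadm
    have hlt : F j - fA j < fB j - t j := by have := hA j; have := ht_le j; omega
    rw [prod_eq_zero (mem_univ j) (by rw [Nat.choose_eq_zero_of_lt hlt]; simp), zero_div]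

/-- Second marginalization identity of Appendix A: summing
p(μ^A, μ^B | t, F)·p(t | F) over all admissible match-count vectors t yields
p(μ^A, μ^B | F) = Π_j C(F_j,f^A_j)·C(F_j,f^B_j)
  / [C(n^A; f^A)·C(n^B; f^B)·C(N,n^A)·C(N,n^B)],
i.e. the two samples are conditionally independent simple random samples
without replacement given the population counts F. -/
theorem marginalize_match_count_vector
    (k : ℕ) (F fA fB : Fin k → ℕ) (N nA nB : ℕ)
    (hN : N = ∑ j, F j) (hnA : nA = ∑ j, fA j) (hnB : nB = ∑ j, fB j)
    (hA : ∀ j, fA j ≤ F j) (hB : ∀ j, fB j ≤ F j) :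
    (∑ t ∈ Finset.Icc (0 : Fin k → ℕ) (fun j => min (fA j) (fB j)),
        if ∀ j, fA j + fB j ≤ F j + t j then
          -- p(μ^A, μ^B | t, F) as derived in Appendix A
          ((∏ j, ((F j - fA j).choose (fB j - t j) : ℚ) *
              ((F j - t j).choose (fA j - t j) : ℚ)) /
            (((nA.factorial : ℚ) / ∏ j, ((fA j).factorial : ℚ)) *
              (((nB.factorial : ℚ) / ∏ j, ((fB j).factorial : ℚ)) *
                (((N - nA).choose (nB - ∑ j, t j) : ℚ) *
                  ((N - ∑ j, t j).choose (nA - ∑ j, t j) : ℚ)))))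
          -- times p(t | F)
          * (((∏ j, ((F j).choose (t j) : ℚ)) / (N.choose (∑ j, t j) : ℚ)) *
              (((nA.choose (∑ j, t j) : ℚ) *
                  ((N - nA).choose (nB - ∑ j, t j) : ℚ)) / (N.choose nB : ℚ)))
        else 0)
    = (∏ j, ((F j).choose (fA j) : ℚ) * ((F j).choose (fB j) : ℚ)) /
        (((nA.factorial : ℚ) / ∏ j, ((fA j).factorial : ℚ)) *
          (((nB.factorial : ℚ) / ∏ j, ((fB j).factorial : ℚ)) *
            ((N.choose nA : ℚ) * (N.choose nB : ℚ)))) :=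
  marginalize_match_count_vector_general k F fA fB N nA nB hN hnA hnB hA
end

section
/- The full conditional of the match counts factorizes into independent hypergeometrics: if p(t | F, μ^A, μ^B) ∝ p(μ^A, μ^B | F, t)·p(t | F) with the expressions from the paper, then p(t | F, μ^A, μ^B) = Π_{j=1}^k C(f^A_j, t_j)·C(F_j − f^A_j, f^B_j − t_j)/C(F_j, f^B_j). Equivalently, as an algebraic identity: Π_j [F_j!/(t_j!(f^A_j−t_j)!(f^B_j−t_j)!(F_j−f^A_j−f^B_j+t_j)!)] divided by its sum over all admissible t equals Π_j C(f^A_j,t_j)C(F_j−f^A_j,f^B_j−t_j)/C(F_j,f^B_j). -/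
/-!
Each factor of the weight is a product of binomial coefficients,
`F!/(t!(a-t)!(b-t)!(F-a-b+t)!) = C(F,a)·C(a,t)·C(F-a,b-t)`, and the admissibility condition
`a + b ≤ F + t` is exactly where `C(F-a,b-t)` is nonzero. The sum over the box of admissible `t`
therefore factorizes over the categories, and Vandermonde's identity evaluates the factor of
category `j` to `C(F_j,a_j)·C(F_j,b_j)`. The common factor `∏ C(F_j,a_j)` cancels.
-/

open Finset

/-- The factor of `p(μ^A, μ^B | F, t) · p(t | F)` contributed by one category. -/
def matchWeight (F a b t : ℕ) : ℚ :=
  F.factorial / (t.factorial * ((a - t).factorial * ((b - t).factorial * (F + t - a - b).factorial)))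

theorem matchWeight_eq_choose_mul_choose_mul_choose {F a b t : ℕ} (hta : t ≤ a) (htb : t ≤ b)
    (hF : a + b ≤ F + t) :
    matchWeight F a b t = F.choose a * (a.choose t * (F - a).choose (b - t)) := by
  rw [matchWeight, Nat.cast_choose ℚ (by omega : a ≤ F), Nat.cast_choose ℚ hta,
    Nat.cast_choose ℚ (by omega : b - t ≤ F - a), show F - a - (b - t) = F + t - a - b by omega]
  field_simp

theorem ite_matchWeight_eq_choose_mul_choose_mul_choose {F a b t : ℕ} (haF : a ≤ F)
    (hta : t ≤ a) (htb : t ≤ b) :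
    (if a + b ≤ F + t then matchWeight F a b t else 0)
      = F.choose a * (a.choose t * (F - a).choose (b - t)) := by
  split_ifs with hF
  · exact matchWeight_eq_choose_mul_choose_mul_choose hta htb hF
  · rw [Nat.choose_eq_zero_of_lt (by omega : F - a < b - t)]
    simp

theorem Nat.sum_Icc_min_choose_mul_choose_sub {F a b : ℕ} (haF : a ≤ F) :
    ∑ i ∈ Icc 0 (min a b), a.choose i * (F - a).choose (b - i) = F.choose b := by
  rw [← Nat.add_sub_cancel' haF, Nat.add_choose_eq, Nat.sum_antidiagonal_eq_sum_range_succ_mk,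
    Nat.add_sub_cancel_left]
  refine sum_subset (fun i hi => ?_) fun i hi hi' => ?_
  · simp only [mem_Icc, mem_range] at hi ⊢
    omega
  simp only [mem_Icc, mem_range] at hi hi'
  rw [Nat.choose_eq_zero_of_lt (by omega : a < i), zero_mul]

theorem sum_Icc_ite_prod_matchWeight {ι : Type*} [Fintype ι] [DecidableEq ι] (F a b : ι → ℕ)
    [∀ t : ι → ℕ, Decidable (∀ j, a j + b j ≤ F j + t j)] (haF : ∀ j, a j ≤ F j) :
    ∑ t ∈ Icc (0 : ι → ℕ) (fun j => min (a j) (b j)),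
        (if ∀ j, a j + b j ≤ F j + t j then ∏ j, matchWeight (F j) (a j) (b j) (t j) else 0)
      = (∏ j, ((F j).choose (a j) : ℚ)) * ∏ j, ((F j).choose (b j) : ℚ) := by
  calc _ = ∑ t ∈ Icc (0 : ι → ℕ) (fun j => min (a j) (b j)), ∏ j,
          ((F j).choose (a j) : ℚ) * ((a j).choose (t j) * (F j - a j).choose (b j - t j)) := by
        refine sum_congr rfl fun t ht => ?_
        calc _ = ∏ j, if a j + b j ≤ F j + t j then matchWeight (F j) (a j) (b j) (t j) else 0 := by
              convert Fintype.prod_ite_zero.symm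
          _ = _ := prod_congr rfl fun j _ => by
              have htj := (mem_Icc.mp ht).2 j
              exact ite_matchWeight_eq_choose_mul_choose_mul_choose (haF j)
                (htj.trans (min_le_left _ _)) (htj.trans (min_le_right _ _))
    _ = ∏ j, ∑ i ∈ Icc 0 (min (a j) (b j)),
          ((F j).choose (a j) : ℚ) * ((a j).choose i * (F j - a j).choose (b j - i)) := by
        rw [Pi.Icc_eq, prod_univ_sum]
        rfl
    _ = _ := by
        rw [← prod_mul_distrib]
        refine prod_congr rfl fun j _ => ?_
        rw [← mul_sum, ← Nat.sum_Icc_min_choose_mul_choose_sub (b := b j) (haF j)]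
        push_cast
        rfl

theorem match_counts_full_conditional_hypergeometric_general
    (k : ℕ) (F fA fB t : Fin k → ℕ)
    (h1 : ∀ j, t j ≤ fA j) (h2 : ∀ j, t j ≤ fB j)
    (h3 : ∀ j, fA j + fB j ≤ F j + t j) :
    (∏ j, ((F j).factorial : ℚ) /
        ((t j).factorial * ((fA j - t j).factorial *
          ((fB j - t j).factorial * (F j + t j - fA j - fB j).factorial)))) /
      (∑ t' ∈ Finset.Icc (0 : Fin k → ℕ) (fun j => min (fA j) (fB j)),
        if ∀ j, fA j + fB j ≤ F j + t' j then
          ∏ j, ((F j).factorial : ℚ) /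
            ((t' j).factorial * ((fA j - t' j).factorial *
              ((fB j - t' j).factorial * (F j + t' j - fA j - fB j).factorial)))
        else 0)
    = ∏ j, ((fA j).choose (t j) : ℚ) *
        ((F j - fA j).choose (fB j - t j) : ℚ) / ((F j).choose (fB j) : ℚ) := by
  have hA : ∀ j, fA j ≤ F j := fun j => by linarith [h2 j, h3 j]
  have hCA : ∏ j, ((F j).choose (fA j) : ℚ) ≠ 0 :=
    prod_ne_zero_iff.mpr fun j _ => Nat.cast_ne_zero.mpr (Nat.choose_pos (hA j)).ne'
  simp only [← matchWeight.eq_1]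
  rw [sum_Icc_ite_prod_matchWeight F fA fB hA,
    prod_congr rfl fun j _ => matchWeight_eq_choose_mul_choose_mul_choose (h1 j) (h2 j) (h3 j),
    prod_mul_distrib, mul_div_mul_left _ _ hCA, ← prod_div_distrib]

/-- Appendix B: the full conditional of the match counts factorizes into
independent hypergeometric distributions. The unnormalized weight
w(t) = Π_j F_j!/(t_j!(f^A_j−t_j)!(f^B_j−t_j)!(F_j−f^A_j−f^B_j+t_j)!),
divided by its sum over all admissible t, equals
Π_j C(f^A_j,t_j)·C(F_j−f^A_j, f^B_j−t_j)/C(F_j,f^B_j). -/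
theorem match_counts_full_conditional_hypergeometric
    (k : ℕ) (F fA fB t : Fin k → ℕ)
    (hA : ∀ j, fA j ≤ F j) (hB : ∀ j, fB j ≤ F j)
    (h1 : ∀ j, t j ≤ fA j) (h2 : ∀ j, t j ≤ fB j)
    (h3 : ∀ j, fA j + fB j ≤ F j + t j) :
    (∏ j, ((F j).factorial : ℚ) /
        ((t j).factorial * ((fA j - t j).factorial *
          ((fB j - t j).factorial * (F j + t j - fA j - fB j).factorial)))) /
      (∑ t' ∈ Finset.Icc (0 : Fin k → ℕ) (fun j => min (fA j) (fB j)),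
        if ∀ j, fA j + fB j ≤ F j + t' j then
          ∏ j, ((F j).factorial : ℚ) /
            ((t' j).factorial * ((fA j - t' j).factorial *
              ((fB j - t' j).factorial * (F j + t' j - fA j - fB j).factorial)))
        else 0)
    = ∏ j, ((fA j).choose (t j) : ℚ) *
        ((F j - fA j).choose (fB j - t j) : ℚ) / ((F j).choose (fB j) : ℚ) :=
  match_counts_full_conditional_hypergeometric_general k F fA fB t h1 h2 h3
end
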